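/- arXiv:1503.09012 — 4 statements merged into one kernel-verified Lean document; each statement's English description precedes it below -/
import Mathlib

section
/- Let T be a finite tree with vertex set V, plumbing matrix A, dual vectors E*_v, and for each nonempty J ⊆ V with T_J a subtree, there exists a positive definite rational symmetric matrix Ã_J, with Ã_J having the same off-diagonal pattern as the tree T_J (entries −1 on edges of T_J in the integer case relaxed to the same sparsity pattern), such that [π_J(E*_j)]_{j∈J} · Ã_J = [E_j]_{j∈J}, where π_J : V ⊗ R → R⟨E_j⟩_{j∈J} is the coordinate projection along R⟨E_v⟩_{v∉J}. -/
/-!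
Take `Ã_J` to be the Schur complement `A_JJ - A_{J,Jᶜ} A_{Jᶜ,Jᶜ}⁻¹ A_{Jᶜ,J}`. By the block-inverse
formula it is the inverse of the `J × J` block of `A⁻¹`, which gives both the identity
`[π_J(E*_j)] · Ã_J = 1` and positive definiteness. For the sparsity pattern, let `j ≠ k` in `J` be
non-adjacent. `A_{Jᶜ,Jᶜ}` is block diagonal along the components of `T - J`, hence so is its
inverse, and `A_{Jᶜ,Jᶜ}⁻¹ A_{Jᶜ,k}` is supported on the components containing a neighbour of `k`.
No vertex of these components is adjacent to `j`: that edge would close a cycle through the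
connected subtree `T_J`.
-/

namespace SimpleGraph

variable {V : Type*} {G : SimpleGraph V}

theorem IsAcyclic.not_adj_of_reachable_compl (hG : G.IsAcyclic) {J : Finset V}
    (hJ : (G.induce (J : Set V)).Preconnected) {j k : V} (hj : j ∈ J) (hk : k ∈ J) (hjk : j ≠ k)
    {u v : {v // v ∉ J}} (huv : (G.comap Subtype.val).Reachable u v) (hvk : G.Adj v k) :
    ¬ G.Adj j u := by
  intro hju
  apply isBridge_iff.1 (isAcyclic_iff_forall_adj_isBridge.1 hG hju)
  have hjk' : (G.deleteEdges {s(j, u.1)}).Reachable j k :=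
    (hJ ⟨j, hj⟩ ⟨k, hk⟩).map ⟨Subtype.val, fun {a b} hab =>
      deleteEdges_adj.2 ⟨hab, by grind [Sym2.eq_iff, u.2, a.2, b.2]⟩⟩
  have hkv : (G.deleteEdges {s(j, u.1)}).Adj k v :=
    deleteEdges_adj.2 ⟨hvk.symm, by grind [Sym2.eq_iff, u.2, v.2]⟩
  have hvu : (G.deleteEdges {s(j, u.1)}).Reachable v u :=
    huv.symm.map ⟨Subtype.val, fun {a b} hab =>
      deleteEdges_adj.2 ⟨hab, by grind [Sym2.eq_iff, a.2, b.2]⟩⟩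
  exact hjk'.trans (hkv.reachable.trans hvu)

end SimpleGraph

namespace Matrix

section BlockDiagonal

variable {ι R : Type*} [Fintype ι] [CommRing R] {D : Matrix ι ι R} {S : Set ι}

theorem mulVec_indicator_of_block (hD : ∀ u w, D u w ≠ 0 → (u ∈ S ↔ w ∈ S)) (x : ι → R) :
    D *ᵥ S.indicator x = S.indicator (D *ᵥ x) := by
  ext u
  change ∑ w, D u w * S.indicator x w = S.indicator (fun u => ∑ w, D u w * x w) u
  by_cases hu : u ∈ S
  · rw [Set.indicator_of_mem hu]
    refine Finset.sum_congr rfl fun w _ => ?_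
    by_cases hw : w ∈ S
    · rw [Set.indicator_of_mem hw]
    · rw [Set.indicator_of_notMem hw, not_imp_comm.1 (hD u w) (fun h => hw (h.1 hu)), zero_mul,
        zero_mul]
  · rw [Set.indicator_of_notMem hu]
    refine Finset.sum_eq_zero fun w _ => ?_
    by_cases hw : w ∈ S
    · rw [not_imp_comm.1 (hD u w) (fun h => hu (h.2 hw)), zero_mul]
    · rw [Set.indicator_of_notMem hw, mul_zero]

theorem support_inv_mulVec_subset [DecidableEq ι] (hD : ∀ u w, D u w ≠ 0 → (u ∈ S ↔ w ∈ S))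
    (hunit : IsUnit D) {y : ι → R} (hy : Function.support y ⊆ S) :
    Function.support (D⁻¹ *ᵥ y) ⊆ S := by
  rw [← Set.indicator_eq_self]
  refine mulVec_injective_of_isUnit hunit ?_
  rw [mulVec_indicator_of_block hD, mulVec_mulVec,
    mul_nonsing_inv _ ((isUnit_iff_isUnit_det D).1 hunit), one_mulVec]
  exact Set.indicator_eq_self.2 hy

end BlockDiagonal

section SchurComplement

variable {V R : Type*} [Fintype V] [DecidableEq V] [CommRing R]

def toBlocksCompl (M : Matrix V V R) (J : Finset V) :
    Matrix ({v // v ∈ J} ⊕ {v // v ∉ J}) ({v // v ∈ J} ⊕ {v // v ∉ J}) R :=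
  M.submatrix (Equiv.sumCompl (· ∈ J)) (Equiv.sumCompl (· ∈ J))

noncomputable def schurComplement (M : Matrix V V R) (J : Finset V) :
    Matrix {v // v ∈ J} {v // v ∈ J} R :=
  (toBlocksCompl M J).toBlocks₁₁ - (toBlocksCompl M J).toBlocks₁₂ *
    (toBlocksCompl M J).toBlocks₂₂⁻¹ * (toBlocksCompl M J).toBlocks₂₁

theorem inv_submatrix_inv_eq_schurComplement {M : Matrix V V R} (J : Finset V)
    (hM : IsUnit M) (hD : IsUnit (toBlocksCompl M J).toBlocks₂₂) :
    ((M⁻¹).submatrix (Subtype.val : {v // v ∈ J} → V) Subtype.val)⁻¹ = schurComplement M J := by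
  have hB : (toBlocksCompl M J)⁻¹.toBlocks₁₁ = (M⁻¹).submatrix Subtype.val Subtype.val := by
    rw [toBlocksCompl, inv_submatrix_equiv]; rfl
  -- naming the blocks lets the `Invertible` instances below be found syntactically
  obtain ⟨A, B, C, D, hABCD⟩ : ∃ A B C D, toBlocksCompl M J = fromBlocks A B C D :=
    ⟨_, _, _, _, (fromBlocks_toBlocks _).symm⟩
  have hunit : IsUnit (fromBlocks A B C D) := hABCD ▸ (isUnit_submatrix_equiv _ _).2 hM
  rw [hABCD] at hB
  rw [hABCD, toBlocks_fromBlocks₂₂] at hD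
  rw [schurComplement, hABCD]
  simp only [toBlocks_fromBlocks₁₁, toBlocks_fromBlocks₁₂, toBlocks_fromBlocks₂₁,
    toBlocks_fromBlocks₂₂]
  let := hD.invertible
  let := hunit.invertible
  let := invertibleOfFromBlocks₂₂Invertible A B C D
  have hinv := congrArg toBlocks₁₁ (invOf_fromBlocks₂₂_eq A B C D)
  rw [toBlocks_fromBlocks₁₁, invOf_eq_nonsing_inv, hB] at hinv
  rw [hinv, invOf_eq_nonsing_inv, nonsing_inv_nonsing_inv _ (isUnit_det_of_invertible _),
    invOf_eq_nonsing_inv]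

theorem schurComplement_apply_eq_zero_of_not_adj {G : SimpleGraph V} (hG : G.IsAcyclic)
    {M : Matrix V V R} (hM : ∀ a b, a ≠ b → ¬G.Adj a b → M a b = 0) {J : Finset V}
    (hJ : (G.induce (J : Set V)).Preconnected) (hD : IsUnit (toBlocksCompl M J).toBlocks₂₂)
    {j k : {v // v ∈ J}} (hjk : j ≠ k) (hnadj : ¬G.Adj j k) :
    schurComplement M J j k = 0 := by
  have hjk' : j.1 ≠ k.1 := Subtype.coe_ne_coe.2 hjk
  have hadj_of_ne_zero : ∀ a b, a ≠ b → M a b ≠ 0 → G.Adj a b :=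
    fun a b hab => not_imp_comm.1 (hM a b hab)
  let S : Set {v // v ∉ J} := {u | ∃ v, (G.comap Subtype.val).Reachable u v ∧ G.Adj v k}
  have hblock : ∀ u w, (toBlocksCompl M J).toBlocks₂₂ u w ≠ 0 → (u ∈ S ↔ w ∈ S) := by
    intro u w huw
    obtain rfl | hne := eq_or_ne u w
    · rfl
    have hadj : (G.comap Subtype.val).Adj u w :=
      hadj_of_ne_zero u w (Subtype.coe_ne_coe.2 hne) huw
    exact ⟨fun ⟨v, hv, hvk⟩ => ⟨v, hadj.symm.reachable.trans hv, hvk⟩,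
      fun ⟨v, hv, hvk⟩ => ⟨v, hadj.reachable.trans hv, hvk⟩⟩
  have hcol : Function.support (fun w : {v // v ∉ J} => M w k) ⊆ S := fun w hw =>
    ⟨w, .rfl, hadj_of_ne_zero w k (fun h => w.2 (h ▸ k.2)) hw⟩
  have hrow : ∀ u ∈ S, M j u = 0 := by
    rintro u ⟨v, huv, hvk⟩
    exact hM j u (fun h => u.2 (h ▸ j.2)) (hG.not_adj_of_reachable_compl hJ j.2 k.2 hjk' huv hvk)
  have hz := support_inv_mulVec_subset hblock hD hcol
  rw [schurComplement, Matrix.sub_apply, Matrix.mul_assoc, mul_apply]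
  change M j k - ∑ u : {v // v ∉ J},
    M j u * ((toBlocksCompl M J).toBlocks₂₂⁻¹ *ᵥ fun w => M w k) u = 0
  rw [hM j k hjk' hnadj, zero_sub, neg_eq_zero]
  refine Finset.sum_eq_zero fun u _ => ?_
  by_cases hu : u ∈ S
  · rw [hrow u hu, zero_mul]
  · rw [Function.notMem_support.1 (fun h => hu (hz h)), mul_zero]

end SchurComplement

end Matrix

open Matrix in
theorem stmt11_general {V : Type*} [Fintype V] [DecidableEq V]
    (G : SimpleGraph V) (hT : G.IsTree)
    (A : Matrix V V ℤ)
    (hPD : (A.map ((↑) : ℤ → ℚ)).PosDef)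
    (hnonadj : ∀ v w, v ≠ w → ¬G.Adj v w → A v w = 0)
    (J : Finset V)
    (hJconn : (G.induce (J : Set V)).Connected) :
    ∃ Atil : Matrix {v // v ∈ J} {v // v ∈ J} ℚ,
      Atil.IsSymm ∧
      (∀ x : {v // v ∈ J} → ℚ, x ≠ 0 → 0 < dotProduct x (Atil.mulVec x)) ∧
      (∀ j k : {v // v ∈ J}, j ≠ k → ¬G.Adj j.1 k.1 → Atil j k = 0) ∧
      (∀ j k : {v // v ∈ J},
        ∑ l : {v // v ∈ J}, (A.map ((↑) : ℤ → ℚ))⁻¹ j.1 l.1 * Atil l k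
          = if j = k then 1 else 0) := by
  set Q := A.map ((↑) : ℤ → ℚ)
  have hD : (toBlocksCompl Q J).toBlocks₂₂.PosDef := hPD.submatrix Subtype.val_injective
  have hQJ : ((Q⁻¹).submatrix (Subtype.val : {v // v ∈ J} → V) Subtype.val).PosDef :=
    hPD.inv.submatrix Subtype.val_injective
  have hS := inv_submatrix_inv_eq_schurComplement J hPD.isUnit hD.isUnit
  have hSpd : (schurComplement Q J).PosDef := hS ▸ hQJ.inv
  refine ⟨schurComplement Q J, isHermitian_iff_isSymm.1 hSpd.isHermitian,
    fun x hx => by simpa using hSpd.dotProduct_mulVec_pos hx,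
    fun j k hjk hnadj => schurComplement_apply_eq_zero_of_not_adj hT.isAcyclic
      (fun a b hab hn => by simp [Q, hnonadj a b hab hn]) hJconn.preconnected hD.isUnit hjk hnadj,
    fun j k => ?_⟩
  rw [← one_apply, ← mul_nonsing_inv _ ((isUnit_iff_isUnit_det _).1 hQJ.isUnit), hS]
  rfl

/-- For a finite tree `T` with plumbing matrix `A` and dual vectors `E*_v`
(the rows of `A⁻¹`), and any nonempty `J ⊆ V` inducing a subtree `T_J`, there
is a positive definite symmetric rational matrix `Ã_J` with the sparsity
pattern of `T_J` (vanishing off-diagonal entries away from edges of `T_J`)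
such that `[π_J(E*_j)]_{j∈J} · Ã_J = [E_j]_{j∈J}`, where `π_J` is the
coordinate projection onto `R⟨E_j⟩_{j∈J}` along `R⟨E_v⟩_{v∉J}`. -/
theorem stmt11 {V : Type*} [Fintype V] [DecidableEq V]
    (G : SimpleGraph V) (hT : G.IsTree)
    (A : Matrix V V ℤ)
    (hPD : (A.map ((↑) : ℤ → ℚ)).PosDef)
    (hadj : ∀ v w, G.Adj v w → A v w = -1)
    (hnonadj : ∀ v w, v ≠ w → ¬G.Adj v w → A v w = 0)
    (J : Finset V) (hJne : J.Nonempty)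
    (hJconn : (G.induce (J : Set V)).Connected) :
    ∃ Atil : Matrix {v // v ∈ J} {v // v ∈ J} ℚ,
      Atil.IsSymm ∧
      (∀ x : {v // v ∈ J} → ℚ, x ≠ 0 → 0 < dotProduct x (Atil.mulVec x)) ∧
      (∀ j k : {v // v ∈ J}, j ≠ k → ¬G.Adj j.1 k.1 → Atil j k = 0) ∧
      (∀ j k : {v // v ∈ J},
        ∑ l : {v // v ∈ J}, (A.map ((↑) : ℤ → ℚ))⁻¹ j.1 l.1 * Atil l k
          = if j = k then 1 else 0) :=
  stmt11_general G hT A hPD hnonadj J hJconn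
end

section
/- Let S(t) = ∑_{l≥0} c_l t^l be the Taylor expansion at 0 of a rational function P(t) + D(t)/∏_{i=1}^m (1 − t^{a_i}) where P, D are polynomials with integer coefficients, a_i > 0, and deg D < ∑_i a_i (so the second summand has negative degree as a rational function). If additionally every exponent appearing in D lies in ∑_i [0,1)·a_i ∩ Z = {0, 1, …, ∑ a_i − 1} and more precisely in the half-open box, then the periodic constant of the expansion of D(t)/∏(1 − t^{a_i}) is zero; consequently pc(S) = P(1). -/
/-!
With `B = ∏ aᵢ`, each `1 - t^{aᵢ}` divides `1 - t^B`, so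
`D / ∏ (1 - t^{aᵢ}) = E / (1 - t^B)^m` with `deg E < m B`. Along multiples of `B`, the partial
sums of `tᵏ / (1 - t^B)^m` are the rising factorials `(n - ⌊k/B⌋)⁽ᵐ⁾ / m!`, polynomials in `n`
that vanish at `n = 0` because `0 ≤ ⌊k/B⌋ < m`. The polynomial part `P` contributes `P(1)` as
soon as `p n > deg P`, so along `n ∈ B ℕ` the counting function of `S` is `P(1)` plus a
polynomial vanishing at `0`.
-/

open Finset
open scoped Nat Polynomial PowerSeries

namespace Polynomial

variable {R : Type*} [CommRing R]

theorem one_sub_X_pow_dvd_one_sub_X_pow {a B : ℕ} (h : a ∣ B) :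
    (1 - X ^ a : R[X]) ∣ 1 - X ^ B := by
  obtain ⟨c, rfl⟩ := h
  simpa [one_pow, pow_mul] using sub_dvd_pow_sub_pow (1 : R[X]) (X ^ a) c

theorem natDegree_one_sub_X_pow [Nontrivial R] (a : ℕ) : (1 - X ^ a : R[X]).natDegree = a := by
  rw [← neg_sub, natDegree_neg, ← C_1, natDegree_X_pow_sub_C]

theorem exists_prod_one_sub_X_pow_mul_eq [IsDomain R] {ι : Type*} (s : Finset ι) {a : ι → ℕ}
    (ha : ∀ i ∈ s, 0 < a i) {B : ℕ} (hB : 0 < B) (hdvd : ∀ i ∈ s, a i ∣ B) :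
    ∃ W : R[X], (∏ i ∈ s, (1 - X ^ a i)) * W = (1 - X ^ B) ^ #s ∧
      W.natDegree + ∑ i ∈ s, a i = #s * B := by
  have hne : ∀ b, 0 < b → (1 - X ^ b : R[X]) ≠ 0 := fun b hb =>
    ne_zero_of_natDegree_gt (n := 0) (by rwa [natDegree_one_sub_X_pow])
  obtain ⟨W, hW⟩ : (∏ i ∈ s, (1 - X ^ a i : R[X])) ∣ (1 - X ^ B) ^ #s := by
    rw [← prod_const]
    exact prod_dvd_prod_of_dvd _ _ fun i hi => one_sub_X_pow_dvd_one_sub_X_pow (hdvd i hi)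
  refine ⟨W, hW.symm, ?_⟩
  have hprod : (∏ i ∈ s, (1 - X ^ a i : R[X])) ≠ 0 :=
    prod_ne_zero_iff.2 fun i hi => hne _ (ha i hi)
  have hW0 : W ≠ 0 := by
    rintro rfl
    simp only [mul_zero, pow_eq_zero_iff', ne_eq, Finset.card_eq_zero] at hW
    exact hne B hB hW.1
  have := congrArg natDegree hW
  rw [natDegree_mul hprod hW0, natDegree_pow, natDegree_one_sub_X_pow,
    natDegree_prod _ _ fun i hi => hne _ (ha i hi)] at this
  simp only [natDegree_one_sub_X_pow] at this
  omega

theorem lt_of_mem_support_mul {A M : ℕ} {D : R[X]} (hD : ∀ k ∈ D.support, k < A) (W : R[X])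
    (hW : W.natDegree + A = M) : ∀ k ∈ (D * W).support, k < M := by
  intro k hk
  have hD0 : D ≠ 0 := by
    rintro rfl
    simp at hk
  have hkE := le_natDegree_of_mem_supp k hk
  have hDW := natDegree_mul_le (p := D) (q := W)
  have hDA := hD _ (natDegree_mem_support_of_nonzero hD0)
  omega

theorem eq_of_eval_natCast_eq [IsDomain R] [CharZero R] {F G : R[X]} (n₀ : ℕ)
    (h : ∀ n, n₀ ≤ n → F.eval (n : R) = G.eval (n : R)) : F = G := by
  refine eq_of_infinite_eval_eq F G (Set.Infinite.mono ?_ ((Set.Ici_infinite n₀).image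
    (Nat.cast_injective.injOn)))
  rintro _ ⟨n, hn, rfl⟩
  exact h n hn

end Polynomial

namespace PowerSeries

variable {R : Type*} [CommRing R]

theorem sum_range_coeff_X_pow_mul (f : R⟦X⟧) (k N : ℕ) :
    ∑ l ∈ range N, coeff l (X ^ k * f) = ∑ l ∈ range (N - k), coeff l f := by
  rcases le_or_gt k N with hkN | hNk
  · obtain ⟨d, rfl⟩ := Nat.exists_eq_add_of_le hkN
    rw [sum_range_add, add_tsub_cancel_left]
    simp only [coeff_X_pow_mul']
    rw [sum_ite_of_false fun x hx => by simp at hx; omega]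
    simp
  · rw [Nat.sub_eq_zero_of_le hNk.le, sum_range_zero]
    refine sum_eq_zero fun l hl => ?_
    rw [coeff_X_pow_mul', if_neg (by simp at hl; omega)]

theorem coeff_mul_add_X_pow_mul_expand {B r i : ℕ} (hB : B ≠ 0) (hi : i < B) (hr : r < B)
    (f : R⟦X⟧) (j : ℕ) :
    coeff (B * j + i) (X ^ r * expand B hB f) = if i = r then coeff j f else 0 := by
  rw [coeff_X_pow_mul', coeff_expand]
  by_cases hir : i = r
  · subst hir
    simp [Nat.mul_div_cancel_left _ (Nat.pos_of_ne_zero hB)]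
  · rw [if_neg hir]
    split_ifs with hle hdvd
    · -- reducing `B * j + i = (B * j + i - r) + r` modulo `B` forces `i = r`
      have := congrArg (· % B) (Nat.sub_add_cancel hle)
      simp [Nat.add_mod, Nat.mod_eq_zero_of_dvd hdvd, Nat.mod_eq_of_lt hi,
        Nat.mod_eq_of_lt hr] at this
      exact absurd this.symm hir
    all_goals rfl

theorem sum_range_mul_coeff_X_pow_mul_expand_of_lt {B r : ℕ} (hB : B ≠ 0) (hr : r < B)
    (f : R⟦X⟧) (n : ℕ) :
    ∑ l ∈ range (B * n), coeff l (X ^ r * expand B hB f) = ∑ j ∈ range n, coeff j f := by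
  induction n with
  | zero => simp
  | succ n ih =>
    rw [mul_add, mul_one, sum_range_add, ih, sum_range_succ]
    congr 1
    rw [sum_congr rfl fun i hi => coeff_mul_add_X_pow_mul_expand hB (mem_range.1 hi) hr f n,
      sum_ite_eq' (range B) r, if_pos (mem_range.2 hr)]

theorem sum_range_mul_coeff_X_pow_mul_expand {B : ℕ} (hB : B ≠ 0) (k : ℕ) (f : R⟦X⟧)
    (n : ℕ) : ∑ l ∈ range (B * n), coeff l (X ^ k * expand B hB f) =
      ∑ j ∈ range (n - k / B), coeff j f := by
  have hX : (X : R⟦X⟧) ^ k = X ^ (k % B) * expand B hB (X ^ (k / B)) := by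
    rw [map_pow, expand_X, ← pow_mul, ← pow_add, Nat.mod_add_div]
  rw [hX, mul_assoc, ← map_mul, sum_range_mul_coeff_X_pow_mul_expand_of_lt hB (Nat.mod_lt k
    (Nat.pos_of_ne_zero hB)), sum_range_coeff_X_pow_mul]

theorem factorial_mul_sum_range_coeff_invOneSubPow {m : ℕ} (hm : 0 < m) (N : ℕ) :
    (m ! : R) * ∑ j ∈ range N, coeff j (invOneSubPow R m : R⟦X⟧) =
      (ascPochhammer R m).eval (N : R) := by
  rw [invOneSubPow_val_eq_mk_sub_one_add_choose_of_pos _ _ hm]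
  cases N with
  | zero => simp [hm.ne']
  | succ N =>
    simp only [coeff_mk]
    have := Nat.sum_range_add_choose N (m - 1)
    rw [← ascPochhammer_eval_cast, ascPochhammer_nat_eq_ascFactorial,
      Nat.ascFactorial_eq_factorial_mul_choose]
    have hm' : N + (m - 1) + 1 = N + m := by omega
    rw [Nat.sub_add_cancel hm, hm'] at this
    push_cast [← this, add_comm (m - 1)]
    rfl

theorem factorial_mul_sum_range_sub_coeff_invOneSubPow {m q : ℕ} (hq : q < m) (n : ℕ) :
    (m ! : R) * ∑ j ∈ range (n - q), coeff j (invOneSubPow R m : R⟦X⟧) =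
      (ascPochhammer R m).eval ((n : R) - q) := by
  rcases le_or_gt q n with hqn | hnq
  · rw [factorial_mul_sum_range_coeff_invOneSubPow (by omega), Nat.cast_sub hqn]
  · rw [Nat.sub_eq_zero_of_le hnq.le, sum_range_zero, mul_zero, ← neg_sub,
      ← Nat.cast_sub hnq.le, ascPochhammer_eval_neg_coe_nat_of_lt (by omega)]

theorem eq_mul_expand_invOneSubPow {B m : ℕ} (hB : B ≠ 0) {f g : R⟦X⟧}
    (h : f * (1 - X ^ B) ^ m = g) : f = g * expand B hB (invOneSubPow R m : R⟦X⟧) := by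
  have hinv : (1 - X ^ B) ^ m * expand B hB (invOneSubPow R m : R⟦X⟧) = 1 := by
    rw [← expand_X B hB, ← map_one (expand B hB), ← map_sub, ← map_pow,
      ← invOneSubPow_inv_eq_one_sub_pow, ← map_mul, Units.inv_val, map_one]
  rw [← h, mul_assoc, hinv, mul_one]

theorem sum_range_coeff_coe_mul (E : R[X]) (g : R⟦X⟧) (N : ℕ) :
    ∑ l ∈ range N, coeff l ((E : R⟦X⟧) * g) =
      ∑ k ∈ E.support, E.coeff k * ∑ l ∈ range N, coeff l (X ^ k * g) := by
  conv_lhs => rw [E.as_sum_support_C_mul_X_pow]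
  rw [← Polynomial.coeToPowerSeries.ringHom_apply, map_sum]
  simp [Finset.sum_mul, Finset.mul_sum, mul_assoc, Finset.sum_comm (s := range N)]

theorem sum_range_coeff_coe_eq_eval_one (P : R[X]) {N : ℕ} (hN : P.natDegree < N) :
    ∑ l ∈ range N, coeff l (P : R⟦X⟧) = P.eval 1 := by
  simp [Polynomial.eval_eq_sum_range' hN]

section Field

variable {K : Type*} [Field K]

/-- For `∑ cₗ Xˡ = E(X) / (1 - X ^ B) ^ m`, the partial sum `∑_{l < B n} cₗ` as a polynomial
in `n`: the monomial `Xᵏ` contributes `#{j ∈ ℕᵐ | ∑ j < n - ⌊k / B⌋} = (n - ⌊k / B⌋)⁽ᵐ⁾ / m!`. -/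
noncomputable def partialSumPoly (E : K[X]) (B m : ℕ) : K[X] :=
  ∑ k ∈ E.support, Polynomial.C (E.coeff k / m !) *
    (ascPochhammer K m).comp (Polynomial.X - Polynomial.C ((k / B : ℕ) : K))

theorem sum_range_mul_coeff_eq_eval_partialSumPoly [CharZero K] {B m : ℕ} (hB : B ≠ 0)
    {E : K[X]} (hE : ∀ k ∈ E.support, k < m * B) (n : ℕ) :
    ∑ l ∈ range (B * n), coeff l ((E : K⟦X⟧) * expand B hB (invOneSubPow K m : K⟦X⟧)) =
      (partialSumPoly E B m).eval (n : K) := by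
  rw [sum_range_coeff_coe_mul, partialSumPoly, Polynomial.eval_finsetSum]
  refine sum_congr rfl fun k hk => ?_
  have hkB : k / B < m := Nat.div_lt_of_lt_mul (by rw [mul_comm]; exact hE k hk)
  rw [sum_range_mul_coeff_X_pow_mul_expand, Polynomial.eval_mul, Polynomial.eval_C,
    Polynomial.eval_comp, Polynomial.eval_sub, Polynomial.eval_X, Polynomial.eval_C,
    ← factorial_mul_sum_range_sub_coeff_invOneSubPow hkB, div_mul_eq_mul_div, mul_left_comm,
    mul_div_cancel_left₀ _ (Nat.cast_ne_zero.2 m.factorial_ne_zero)]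

theorem partialSumPoly_eval_zero {B m : ℕ} {E : K[X]}
    (hE : ∀ k ∈ E.support, k < m * B) : (partialSumPoly E B m).eval 0 = 0 := by
  rw [partialSumPoly, Polynomial.eval_finsetSum]
  refine sum_eq_zero fun k hk => ?_
  have hkB : k / B < m := Nat.div_lt_of_lt_mul (by rw [mul_comm]; exact hE k hk)
  simp [ascPochhammer_eval_neg_coe_nat_of_lt hkB]

end Field

end PowerSeries

open Polynomial

theorem eval_zero_eq_eval_one_of_eval_eq_sum_range_coeff {K ι : Type*} [Field K] [CharZero K]
    (s : Finset ι) (a : ι → ℕ) (ha : ∀ i ∈ s, 0 < a i) (P D : K[X])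
    (hD : ∀ k ∈ D.support, k < ∑ i ∈ s, a i) (S : K⟦X⟧)
    (hS : S * ∏ i ∈ s, (1 - PowerSeries.X ^ a i) = P * ∏ i ∈ s, (1 - PowerSeries.X ^ a i) + D)
    {p : ℕ} (hp : 0 < p) (F : K[X])
    (hF : ∀ n : ℕ, 0 < n → F.eval (n : K) = ∑ l ∈ range (p * n), PowerSeries.coeff l S) :
    F.eval 0 = P.eval 1 := by
  set B := ∏ i ∈ s, a i
  have hB : 0 < B := prod_pos ha
  obtain ⟨W, hW, hWdeg⟩ := exists_prod_one_sub_X_pow_mul_eq (R := K) s ha hB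
    fun i hi => dvd_prod_of_mem a hi
  have hE := lt_of_mem_support_mul hD W hWdeg
  have hSP : S - P = ((D * W : K[X]) : K⟦X⟧) *
      PowerSeries.expand B hB.ne' (PowerSeries.invOneSubPow K #s : K⟦X⟧) := by
    apply PowerSeries.eq_mul_expand_invOneSubPow
    have hW' := congrArg (Polynomial.coeToPowerSeries.ringHom (R := K)) hW
    simp only [map_mul, map_prod, map_pow, map_sub, map_one,
      Polynomial.coeToPowerSeries.ringHom_apply, Polynomial.coe_X] at hW'
    rw [← hW', ← mul_assoc, sub_mul, hS, add_sub_cancel_left, Polynomial.coe_mul]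
  have hFB : F.comp (C (B : K) * X) =
      C (P.eval 1) + (PowerSeries.partialSumPoly (D * W) B #s).comp (C (p : K) * X) := by
    refine eq_of_eval_natCast_eq (P.natDegree + 1) fun n hn => ?_
    have hN : P.natDegree < p * (B * n) := by
      rw [← mul_assoc]
      exact lt_of_lt_of_le (by omega) (Nat.le_mul_of_pos_left n (Nat.mul_pos hp hB))
    simp only [eval_comp, eval_mul, eval_C, eval_X, eval_add, ← Nat.cast_mul]
    calc F.eval ((B * n : ℕ) : K)
        = ∑ l ∈ range (p * (B * n)), PowerSeries.coeff l S :=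
          hF (B * n) (Nat.mul_pos hB (by omega))
      _ = ∑ l ∈ range (p * (B * n)), PowerSeries.coeff l (P : K⟦X⟧) +
            ∑ l ∈ range (B * (p * n)), PowerSeries.coeff l (S - (P : K⟦X⟧)) := by
        rw [mul_left_comm B, ← sum_add_distrib]
        simp
      _ = P.eval 1 + (PowerSeries.partialSumPoly (D * W) B #s).eval ((p * n : ℕ) : K) := by
        rw [PowerSeries.sum_range_coeff_coe_eq_eval_one P hN, hSP,
          PowerSeries.sum_range_mul_coeff_eq_eval_partialSumPoly hB.ne' hE]
  simpa [PowerSeries.partialSumPoly_eval_zero hE] using congrArg (eval 0) hFB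

/-- If `S(t)` is the Taylor expansion of `P(t) + D(t)/∏_{i}(1 − t^{a_i})` with
`P, D` integer polynomials, `a_i > 0`, and all exponents of `D` lying in the
half-open box `{0, 1, …, ∑ a_i − 1}`, then the periodic constant of `S` equals
`P(1)`: any polynomial `F` representing a counting function
`n ↦ ∑_{l < pn} c_l` of `S` has constant term `F(0) = P(1)`. -/
theorem stmt15 (m : ℕ) (a : Fin m → ℕ) (ha : ∀ i, 0 < a i)
    (P D : Polynomial ℤ)
    (hD : ∀ k ∈ D.support, k < ∑ i, a i)
    (S : PowerSeries ℤ)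
    (hS : S * ∏ i, (1 - PowerSeries.X ^ a i)
        = (P : PowerSeries ℤ) * ∏ i, (1 - PowerSeries.X ^ a i)
          + (D : PowerSeries ℤ))
    (p : ℕ) (hp : 0 < p) (F : Polynomial ℚ)
    (hF : ∀ n : ℕ, 0 < n →
      F.eval (n : ℚ) = ∑ l ∈ Finset.range (p * n), ((PowerSeries.coeff (R := ℤ) l) S : ℚ)) :
    F.eval 0 = ((P.eval 1 : ℤ) : ℚ) := by
  have hS' := congrArg (PowerSeries.map (Int.castRingHom ℚ)) hS
  simp only [map_mul, map_add, map_prod, map_sub, map_one, map_pow, PowerSeries.map_X,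
    ← Polynomial.polynomial_map_coe] at hS'
  rw [← eq_intCast (Int.castRingHom ℚ), ← Polynomial.eval_one_map]
  refine eval_zero_eq_eval_one_of_eval_eq_sum_range_coeff univ a (fun i _ => ha i) _ _
    (fun k hk => hD k (Polynomial.support_map_subset _ _ hk)) _ hS' hp F ?_
  simpa [PowerSeries.coeff_map] using hF
end

section
/- Let T be a finite tree with plumbing matrix A, dual vectors E*_v, Lipman cone S' = Z_{≥0}⟨E*_v⟩, and L the sublattice spanned by {E_v}. Fix h ∈ H = L'/L and let s_h be the unique minimal element of {l' ∈ L' : [l'] = h} ∩ S' with respect to the partial order l₁ ≥ l₂ iff l₁ − l₂ ∈ Z_{≥0}⟨E_v⟩ restricted to this set. Let u be a leaf of T and π^{(u)} : L' → L'_{T∖u} the projection defined by π^{(u)}(E*_v) = E*_v (the dual in T∖u) for v ≠ u and π^{(u)}(E*_u) = 0. Then π^{(u)}(s_h) is the unique minimal element s_{h̄} of {l' ∈ L'_{T∖u} : [l'] = h̄} ∩ S'_{T∖u}, where h̄ = [π^{(u)}(s_h)]. -/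
open scoped Classical

variable {V : Type*} [Fintype V] [DecidableEq V]

/-- Membership in the Lipman cone `S' = Z_{≥0}⟨E*_v⟩`, where `E*_v` are the
given dual vectors (rows of the inverse plumbing matrix). -/
def memLipman {W : Type*} [Fintype W] (Estar : W → W → ℚ) (x : W → ℚ) : Prop :=
  ∃ n : W → ℕ, x = ∑ v, (n v : ℚ) • Estar v

/-- The plumbing matrix of `T ∖ u` (over `ℚ`): the principal submatrix of `A`
obtained by deleting row and column `u`. -/
def delMat (A : Matrix V V ℤ) (u : V) :
    Matrix {v : V // v ≠ u} {v : V // v ≠ u} ℚ :=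
  Matrix.of fun v w => ((A.map ((↑) : ℤ → ℚ)) v.1 w.1 : ℚ)

/-- The projection `π^{(u)} : L' → L'_{T∖u}` determined by
`π^{(u)}(E*_v) = E*_v` (the dual vector of `T∖u`) for `v ≠ u` and
`π^{(u)}(E*_u) = 0`: writing `x = A⁻¹ m`, it sends `x` to `(A')⁻¹ m'` where
`A'` is the plumbing matrix of `T∖u` and `m'` the restriction of `m = A x`. -/
noncomputable def projAway (A : Matrix V V ℤ) (u : V) (x : V → ℚ) :
    {v : V // v ≠ u} → ℚ :=
  (delMat A u)⁻¹.mulVec fun v => ((A.map ((↑) : ℤ → ℚ)).mulVec x) v.1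

/-! Writing `m = A x`, membership of `x` in the Lipman cone means `m ∈ ℕ^V`. Since the
off-diagonal entries of a plumbing matrix are nonpositive, the cone is closed under pointwise
minima within a class of `L'/L`. So for `y ∈ S'_{T∖u}` in the class of `p = π(s_h)`, the
element `p ⊓ y` is again in `S'_{T∖u}`, and `l = p - p ⊓ y ≥ 0` lies in `L`. Extended by `0`
at `u`, `s_h - l` stays in `S'`: away from `u` its image under `A` is that of `p ⊓ y` under the
deleted matrix, and at `u` it only grows since `(A l)_u = ∑_w A_{uw} l_w ≤ 0`. Minimality of
`s_h` now forces `l = 0`, i.e. `p ≤ y`. -/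

open Matrix

/-- The lattice `L` spanned by the `E_v`, in the coordinates used by `memLipman`. -/
def intLattice (W : Type*) : AddSubgroup (W → ℚ) where
  carrier := {x | ∀ v, ∃ m : ℤ, x v = m}
  zero_mem' v := ⟨0, by simp⟩
  add_mem' hx hy v := by
    obtain ⟨m, hm⟩ := hx v
    obtain ⟨n, hn⟩ := hy v
    exact ⟨m + n, by simp [hm, hn]⟩
  neg_mem' hx v := by
    obtain ⟨m, hm⟩ := hx v
    exact ⟨-m, by simp [hm]⟩

section IntLattice

variable {W : Type*}

theorem inf_sub_mem_intLattice {x y : W → ℚ} (h : y - x ∈ intLattice W) :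
    x ⊓ y - x ∈ intLattice W := fun v => by
  rcases min_choice (x v) (y v) with hv | hv
  · exact ⟨0, by simp [hv]⟩
  · simpa [hv] using h v

theorem mulVec_mem_intLattice [Fintype W] {W' : Type*} (A : Matrix W' W ℤ) {x : W → ℚ}
    (hx : x ∈ intLattice W) : A.map (↑) *ᵥ x ∈ intLattice W' := by
  choose m hm using hx
  obtain rfl : x = (Int.castRingHom ℚ) ∘ m := funext hm
  exact fun v => ⟨(A *ᵥ m) v, ((Int.castRingHom ℚ).map_mulVec A m v).symm⟩

theorem extend_mem_intLattice {α : Type*} {f : α → W} (hf : f.Injective) {l : α → ℚ}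
    (hl : l ∈ intLattice α) : Function.extend f l 0 ∈ intLattice W := fun v => by
  by_cases hv : ∃ a, f a = v
  · obtain ⟨a, rfl⟩ := hv
    rw [hf.extend_apply]
    exact hl a
  · exact ⟨0, by simp [Function.extend_apply' _ _ _ hv]⟩

end IntLattice

section LipmanCone

variable {W : Type*} [Fintype W] [DecidableEq W]

theorem memLipman_inv_iff {M : Matrix W W ℚ} (hM : M.IsSymm) (hdet : IsUnit M) {x : W → ℚ} :
    memLipman (fun v w => M⁻¹ v w) x ↔ 0 ≤ M *ᵥ x ∧ M *ᵥ x ∈ intLattice W := by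
  have := hdet.invertible
  have hsum (n : W → ℕ) : ∑ v, (n v : ℚ) • M⁻¹ v = M⁻¹ *ᵥ fun v => (n v : ℚ) := by
    rw [← vecMul_eq_sum, ← mulVec_transpose, (hM.inv).eq]
  simp only [memLipman, hsum]
  constructor
  · rintro ⟨n, rfl⟩
    rw [mulVec_mulVec, mul_inv_of_invertible, one_mulVec]
    exact ⟨fun v => Nat.cast_nonneg _, fun v => ⟨n v, rfl⟩⟩
  · rintro ⟨hpos, hint⟩
    choose m hm using hint
    refine ⟨fun v => (m v).toNat, ?_⟩
    rw [inv_mulVec_eq_vec]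
    funext v
    have : 0 ≤ m v := by exact_mod_cast (hm v ▸ hpos v : (0 : ℚ) ≤ m v)
    rw [hm v]
    exact_mod_cast Int.toNat_of_nonneg this

theorem memLipman_inv_iff_of_posDef {M : Matrix W W ℚ} (hM : M.PosDef) {x : W → ℚ} :
    memLipman (fun v w => M⁻¹ v w) x ↔ 0 ≤ M *ᵥ x ∧ M *ᵥ x ∈ intLattice W :=
  memLipman_inv_iff (isHermitian_iff_isSymm.1 hM.isHermitian) hM.isUnit

end LipmanCone

section ZMatrix

variable {W : Type*} [Fintype W]

theorem mulVec_apply_le_of_le_of_eq {M : Matrix W W ℚ} (hM : ∀ v w, v ≠ w → M v w ≤ 0)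
    {x y : W → ℚ} (hxy : x ≤ y) {v : W} (hv : x v = y v) : (M *ᵥ y) v ≤ (M *ᵥ x) v := by
  refine Finset.sum_le_sum fun w _ => ?_
  rcases eq_or_ne v w with rfl | hvw
  · rw [hv]
  · exact mul_le_mul_of_nonpos_left (hxy w) (hM v w hvw)

theorem mulVec_inf_nonneg {M : Matrix W W ℚ} (hM : ∀ v w, v ≠ w → M v w ≤ 0) {x y : W → ℚ}
    (hx : 0 ≤ M *ᵥ x) (hy : 0 ≤ M *ᵥ y) : 0 ≤ M *ᵥ (x ⊓ y) := fun v => by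
  rcases min_choice (x v) (y v) with hv | hv
  · exact (hx v).trans (mulVec_apply_le_of_le_of_eq hM inf_le_left hv)
  · exact (hy v).trans (mulVec_apply_le_of_le_of_eq hM inf_le_right hv)

end ZMatrix

theorem inf_memLipman {W : Type*} [Fintype W] [DecidableEq W] {A : Matrix W W ℤ}
    (hA : (A.map ((↑) : ℤ → ℚ)).PosDef) (hoff : ∀ v w, v ≠ w → A v w ≤ 0) {x y : W → ℚ}
    (hx : memLipman (fun v w => (A.map ((↑) : ℤ → ℚ))⁻¹ v w) x)
    (hy : memLipman (fun v w => (A.map ((↑) : ℤ → ℚ))⁻¹ v w) y) (hxy : y - x ∈ intLattice W) :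
    memLipman (fun v w => (A.map ((↑) : ℤ → ℚ))⁻¹ v w) (x ⊓ y) := by
  rw [memLipman_inv_iff_of_posDef hA] at hx hy ⊢
  have hoff' : ∀ v w, v ≠ w → A.map ((↑) : ℤ → ℚ) v w ≤ 0 := fun v w hvw => by
    simpa using hoff v w hvw
  refine ⟨mulVec_inf_nonneg hoff' hx.1 hy.1, ?_⟩
  have hsplit : x ⊓ y = x + (x ⊓ y - x) := (add_sub_cancel x _).symm
  rw [hsplit, mulVec_add]
  exact add_mem hx.2 (mulVec_mem_intLattice A (inf_sub_mem_intLattice hxy))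

theorem posDef_delMat {W : Type*} {A : Matrix W W ℤ} (u : W)
    (hA : (A.map ((↑) : ℤ → ℚ)).PosDef) : (delMat A u).PosDef :=
  hA.submatrix Subtype.val_injective

theorem mulVec_extend_val {W : Type*} [Fintype W] (M : Matrix W W ℚ) (p : W → Prop)
    [DecidablePred p] (l : Subtype p → ℚ) (v : W) :
    (M *ᵥ Function.extend Subtype.val l 0) v = ∑ w : Subtype p, M v w * l w := by
  rw [mulVec, dotProduct, ← Fintype.sum_subtype_add_sum_subtype p]
  have hout (w : {w // ¬p w}) : Function.extend Subtype.val l 0 w.1 = 0 :=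
    Function.extend_apply' _ _ _ fun ⟨a, ha⟩ => w.2 (ha ▸ a.2)
  simp [hout]

section Deletion

variable {W : Type*} [Fintype W] [DecidableEq W] {A : Matrix W W ℤ} (u : W)

theorem delMat_mulVec_projAway (hA : (A.map ((↑) : ℤ → ℚ)).PosDef) (x : W → ℚ) :
    delMat A u *ᵥ projAway A u x = fun v => (A.map ((↑) : ℤ → ℚ) *ᵥ x) v.1 := by
  have := (posDef_delMat u hA).isUnit.invertible
  rw [projAway, mulVec_mulVec, mul_inv_of_invertible, one_mulVec]

theorem memLipman_projAway (hA : (A.map ((↑) : ℤ → ℚ)).PosDef) {s : W → ℚ}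
    (hs : memLipman (fun v w => (A.map ((↑) : ℤ → ℚ))⁻¹ v w) s) :
    memLipman (fun v w => (delMat A u)⁻¹ v w) (projAway A u s) := by
  rw [memLipman_inv_iff_of_posDef hA] at hs
  rw [memLipman_inv_iff_of_posDef (posDef_delMat u hA), delMat_mulVec_projAway u hA]
  exact ⟨fun v => hs.1 v, fun v => hs.2 v⟩

theorem sub_extend_memLipman (hA : (A.map ((↑) : ℤ → ℚ)).PosDef)
    (hoff : ∀ v w, v ≠ w → A v w ≤ 0) {s : W → ℚ}
    (hs : memLipman (fun v w => (A.map ((↑) : ℤ → ℚ))⁻¹ v w) s)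
    {l : {v // v ≠ u} → ℚ} (hl : 0 ≤ l) (hlL : l ∈ intLattice _)
    (hsl : memLipman (fun v w => (delMat A u)⁻¹ v w) (projAway A u s - l)) :
    memLipman (fun v w => (A.map ((↑) : ℤ → ℚ))⁻¹ v w) (s - Function.extend Subtype.val l 0) := by
  rw [memLipman_inv_iff_of_posDef hA] at hs ⊢
  rw [memLipman_inv_iff_of_posDef (posDef_delMat u hA), mulVec_sub,
    delMat_mulVec_projAway u hA] at hsl
  rw [mulVec_sub]
  refine ⟨fun v => ?_,
    sub_mem hs.2 (mulVec_mem_intLattice A (extend_mem_intLattice Subtype.val_injective hlL))⟩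
  rw [Pi.zero_apply, Pi.sub_apply, sub_nonneg, mulVec_extend_val]
  by_cases hv : v = u
  · subst hv
    calc ∑ w : {w // w ≠ v}, A.map ((↑) : ℤ → ℚ) v w * l w ≤ 0 :=
          Finset.sum_nonpos fun w _ =>
            mul_nonpos_of_nonpos_of_nonneg (by simpa using hoff v w (Ne.symm w.2)) (hl w)
      _ ≤ _ := hs.1 v
  · exact sub_nonneg.1 (hsl.1 ⟨v, hv⟩)

theorem projAway_le_of_memLipman (hA : (A.map ((↑) : ℤ → ℚ)).PosDef)
    (hoff : ∀ v w, v ≠ w → A v w ≤ 0) {s : W → ℚ}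
    (hs : memLipman (fun v w => (A.map ((↑) : ℤ → ℚ))⁻¹ v w) s)
    (hmin : ∀ y, memLipman (fun v w => (A.map ((↑) : ℤ → ℚ))⁻¹ v w) y →
      y - s ∈ intLattice W → s ≤ y)
    {y : {v // v ≠ u} → ℚ} (hy : memLipman (fun v w => (delMat A u)⁻¹ v w) y)
    (hyL : y - projAway A u s ∈ intLattice _) : projAway A u s ≤ y := by
  set p := projAway A u s
  have hinf : memLipman (fun v w => (delMat A u)⁻¹ v w) (p ⊓ y) :=
    inf_memLipman (A := A.submatrix (Subtype.val : {v // v ≠ u} → W) Subtype.val)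
      (posDef_delMat u hA) (fun v w hvw => hoff v w (Subtype.coe_injective.ne hvw))
      (memLipman_projAway u hA hs) hy hyL
  have hlL : p - p ⊓ y ∈ intLattice _ := by
    simpa using neg_mem (inf_sub_mem_intLattice hyL)
  have hlift := sub_extend_memLipman u hA hoff hs (sub_nonneg.2 inf_le_left) hlL
    (by rwa [sub_sub_cancel])
  have hle := hmin _ hlift <| by
    simpa using neg_mem (extend_mem_intLattice Subtype.val_injective hlL)
  exact fun v => by simpa using hle v

end Deletion

theorem stmt18_general (G : SimpleGraph V)
    (A : Matrix V V ℤ)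
    (hPD : (A.map ((↑) : ℤ → ℚ)).PosDef)
    (hadjA : ∀ v w, G.Adj v w → A v w = -1)
    (hnonadj : ∀ v w, v ≠ w → ¬G.Adj v w → A v w = 0)
    (u : V)
    (s : V → ℚ)
    (hsS : memLipman (fun v w => (A.map ((↑) : ℤ → ℚ))⁻¹ v w) s)
    (hmin : ∀ y : V → ℚ,
      memLipman (fun v w => (A.map ((↑) : ℤ → ℚ))⁻¹ v w) y →
      (∀ v, ∃ m : ℤ, y v - s v = (m : ℚ)) → ∀ v, s v ≤ y v) :
    memLipman (fun v w => (delMat A u)⁻¹ v w) (projAway A u s)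
    ∧ (∀ y : {v : V // v ≠ u} → ℚ,
        memLipman (fun v w => (delMat A u)⁻¹ v w) y →
        (∀ v, ∃ m : ℤ, y v - projAway A u s v = (m : ℚ)) →
        ∀ v, projAway A u s v ≤ y v)
    ∧ (∀ z : {v : V // v ≠ u} → ℚ,
        memLipman (fun v w => (delMat A u)⁻¹ v w) z →
        (∀ v, ∃ m : ℤ, z v - projAway A u s v = (m : ℚ)) →
        (∀ y : {v : V // v ≠ u} → ℚ,
          memLipman (fun v w => (delMat A u)⁻¹ v w) y →
          (∀ v, ∃ m : ℤ, y v - z v = (m : ℚ)) → ∀ v, z v ≤ y v) →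
        z = projAway A u s) := by
  have hoff : ∀ v w, v ≠ w → A v w ≤ 0 := fun v w hvw => by
    by_cases h : G.Adj v w
    · simp [hadjA v w h]
    · simp [hnonadj v w hvw h]
  have hproj := memLipman_projAway u hPD hsS
  have hleast := fun y => projAway_le_of_memLipman (y := y) u hPD hoff hsS hmin
  refine ⟨hproj, hleast, fun z hz hzL hzmin => le_antisymm (hzmin _ hproj ?_) (hleast z hz hzL)⟩
  exact sub_mem_comm_iff.1 (show z - projAway A u s ∈ intLattice _ from hzL)

/-- Deleting a leaf `u` of the tree `T`, the minimal representative `s_h` of a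
class `h` in the Lipman cone projects under `π^{(u)}` onto the minimal
representative `s_{h̄}` of the class `h̄ = [π^{(u)}(s_h)]` for `T∖u`:
`π^{(u)}(s_h)` lies in `S'_{T∖u}`, is dominated by every element of
`S'_{T∖u}` in its class, and is the unique such element. -/
theorem stmt18 (G : SimpleGraph V) (hT : G.IsTree)
    (A : Matrix V V ℤ)
    (hPD : (A.map ((↑) : ℤ → ℚ)).PosDef)
    (hadjA : ∀ v w, G.Adj v w → A v w = -1)
    (hnonadj : ∀ v w, v ≠ w → ¬G.Adj v w → A v w = 0)
    (u w0 : V) (hadj : G.Adj u w0) (hleaf : ∀ w, G.Adj u w → w = w0)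
    (s : V → ℚ)
    (hsS : memLipman (fun v w => (A.map ((↑) : ℤ → ℚ))⁻¹ v w) s)
    (hmin : ∀ y : V → ℚ,
      memLipman (fun v w => (A.map ((↑) : ℤ → ℚ))⁻¹ v w) y →
      (∀ v, ∃ m : ℤ, y v - s v = (m : ℚ)) → ∀ v, s v ≤ y v) :
    memLipman (fun v w => (delMat A u)⁻¹ v w) (projAway A u s)
    ∧ (∀ y : {v : V // v ≠ u} → ℚ,
        memLipman (fun v w => (delMat A u)⁻¹ v w) y →
        (∀ v, ∃ m : ℤ, y v - projAway A u s v = (m : ℚ)) →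
        ∀ v, projAway A u s v ≤ y v)
    ∧ (∀ z : {v : V // v ≠ u} → ℚ,
        memLipman (fun v w => (delMat A u)⁻¹ v w) z →
        (∀ v, ∃ m : ℤ, z v - projAway A u s v = (m : ℚ)) →
        (∀ y : {v : V // v ≠ u} → ℚ,
          memLipman (fun v w => (delMat A u)⁻¹ v w) y →
          (∀ v, ∃ m : ℤ, y v - z v = (m : ℚ)) → ∀ v, z v ≤ y v) →
        z = projAway A u s) :=
  stmt18_general G A hPD hadjA hnonadj u s hsS hmin
end

section
/- Let T be a finite tree with vertex set V and let N = {v : δ_v ≥ 3} be its nodes. Define the orbifold graph T^orb on N by connecting two nodes iff they are joined in T by a path whose interior vertices all have degree 2. Let N_tree be the set of nonempty J ⊆ N such that T^orb_J is a subtree of T^orb. Then: (a) for every nonempty I ⊆ N, the set J = Ī ∩ N is the minimal element of N_tree containing I, where Ī is the vertex set of the minimal subtree of T containing I; and (b) the nonempty subsets of N decompose as the disjoint union over J ∈ N_tree of {I : E_J ⊆ I ⊆ J}, where E_J is the set of end-vertices of T^orb_J (with E_J = J when |J| = 1). -/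
open scoped Classical

variable {V : Type*} [Fintype V]

/-- The nodes of `T`: vertices of degree at least 3. -/
abbrev Nodes (G : SimpleGraph V) [DecidableRel G.Adj] : Type _ :=
  {v : V // 3 ≤ G.degree v}

/-- The orbifold graph `T^orb` on the nodes of `T`: two nodes are adjacent iff
they are joined in `T` by a path all of whose interior vertices have degree 2. -/
def orbGraph (G : SimpleGraph V) [DecidableRel G.Adj] :
    SimpleGraph (Nodes G) :=
  SimpleGraph.fromRel fun a b =>
    ∃ p : G.Walk a.1 b.1, p.IsPath ∧
      ∀ x ∈ p.support, x ≠ a.1 → x ≠ b.1 → G.degree x = 2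

/-- The vertex set `Ī ∩ N`: nodes lying in the minimal subtree of `T`
containing `I` (the union of the paths between members of `I`). -/
noncomputable def minJ (G : SimpleGraph V) [DecidableRel G.Adj]
    (I : Finset (Nodes G)) : Finset (Nodes G) :=
  Finset.univ.filter fun w =>
    ∃ a ∈ I, ∃ b ∈ I, ∃ p : G.Walk a.1 b.1, p.IsPath ∧ w.1 ∈ p.support

/-- `J ∈ N_tree`: a nonempty node set inducing a subtree of `T^orb`. -/
def NTree (G : SimpleGraph V) [DecidableRel G.Adj]
    (J : Finset (Nodes G)) : Prop :=
  J.Nonempty ∧ ((orbGraph G).induce (J : Set (Nodes G))).Connected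

/-- End vertices of the induced subgraph of `T^orb` on `J`. -/
noncomputable def endVertsOrb (G : SimpleGraph V) [DecidableRel G.Adj]
    (J : Finset (Nodes G)) : Finset (Nodes G) :=
  J.filter fun v => (J.filter fun w => (orbGraph G).Adj v w).card ≤ 1


/-!
Along the `T`-path between two nodes, consecutive nodes are adjacent in `T^orb`; conversely a walk
in `T^orb` unfolds to a walk in `T` all of whose nodes lie on the orbifold walk. As paths in a tree
are unique, `Ī ∩ N` is therefore connected in `T^orb` and lies in every `J ∈ N_tree` containing
`I`. A node of `Ī ∩ N` outside `I` is interior to a path between members of `I`, so it has an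
orbifold neighbour on each side: the end vertices lie in `I`.

Conversely let `E_J ⊆ I ⊆ J`. A node `v ∈ J \ I` has two orbifold neighbours in `J`, reached from
`v` along different edges. Keep walking away from `v` in `J`, never leaving a node by the edge one
arrived on: in a tree this stays a path, so it must stop, and it can only stop in `I`. Joining the
two walks puts `v` on a path between members of `I`, so `J ⊆ Ī ∩ N`, and minimality gives
equality.
-/

namespace SimpleGraph

variable {α : Type*} {G : SimpleGraph α}

lemma eq_of_adj_of_degree_le_two [G.LocallyFinite] {c x y z : α} (hc : G.degree c ≤ 2)
    (hx : G.Adj c x) (hy : G.Adj c y) (hz : G.Adj c z) (hyx : y ≠ x) (hzx : z ≠ x) : y = z := by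
  classical
  by_contra hyz
  have hsub : ({x, y, z} : Finset α) ⊆ G.neighborFinset c := by
    simp [Finset.insert_subset_iff, hx, hy, hz]
  have := Finset.card_le_card hsub
  rw [Finset.card_insert_of_notMem (by simp [hyx.symm, hzx.symm]), Finset.card_pair hyz,
    card_neighborFinset_eq_degree] at this
  omega

namespace Walk

lemma snd_append_of_not_nil {u v w : α} {p : G.Walk u v} (hp : ¬p.Nil) (q : G.Walk v w) :
    (p.append q).snd = p.snd := by
  cases p with
  | nil => exact absurd Nil.nil hp
  | cons h p => simp [cons_append]

lemma IsPath.eq_of_mem_support_takeUntil_of_mem_support_dropUntil {u v w x : α}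
    {p : G.Walk u v} (hp : p.IsPath) (hw : w ∈ p.support)
    (h₁ : x ∈ (p.takeUntil w hw).support) (h₂ : x ∈ (p.dropUntil w hw).support) : x = w := by
  have hnodup := hp.support_nodup
  rw [← p.take_spec hw, support_append] at hnodup
  rw [← cons_tail_support, List.mem_cons] at h₂
  exact h₂.resolve_right (List.disjoint_of_nodup_append hnodup h₁)

lemma IsPath.two_le_degree [G.LocallyFinite] {u v x : α} {p : G.Walk u v} (hp : p.IsPath)
    (hx : x ∈ p.support) (hxu : x ≠ u) (hxv : x ≠ v) : 2 ≤ G.degree x := by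
  obtain ⟨i, rfl, hi⟩ := mem_support_iff_exists_getVert.mp hx
  have hi0 : i ≠ 0 := by rintro rfl; simp at hxu
  have hil : i < p.length := lt_of_le_of_ne hi (by rintro rfl; simp at hxv)
  rw [← hp.ncard_neighborSet_toSubgraph_internal_eq_two hi0 hil, ← card_neighborSet_eq_degree,
    Set.fintypeCard_eq_ncard]
  exact Set.ncard_le_ncard (p.toSubgraph.neighborSet_subset _)

/-- At an interior vertex of degree `≤ 2` a path has no choice where to continue. -/
lemma IsPath.end_eq_of_snd_eq [G.LocallyFinite] {x u z : α} {p : G.Walk x u} {q : G.Walk x z}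
    (hp : p.IsPath) (hq : q.IsPath) (hpd : ∀ y ∈ p.support, y ≠ x → y ≠ u → G.degree y ≤ 2)
    (hqd : ∀ y ∈ q.support, y ≠ x → y ≠ z → G.degree y ≤ 2) (hu : 3 ≤ G.degree u)
    (hz : 3 ≤ G.degree z) (h : p.snd = q.snd) : u = z := by
  induction p generalizing z with
  | nil =>
    cases q with
    | nil => rfl
    | cons hxc q => simp at h; exact absurd h hxc.ne
  | @cons x c u hxc p ih =>
    cases q with
    | nil => simp at h; exact absurd h.symm hxc.ne
    | @cons _ d _ hxd q =>
      obtain rfl : c = d := by simpa using h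
      rw [cons_isPath_iff] at hp hq
      by_cases hcu : c = u
      · subst hcu
        by_contra hcz
        have := hqd c (by simp) hxc.ne' hcz
        omega
      by_cases hcz : c = z
      · subst hcz
        have := hpd c (by simp) hxc.ne' hcu
        omega
      refine ih hp.1 hq.1
        (fun y hy _ hyu => hpd y (by simp [hy]) (by rintro rfl; exact hp.2 hy) hyu)
        (fun y hy _ hyz => hqd y (by simp [hy]) (by rintro rfl; exact hq.2 hy) hyz) hu hz ?_
      have hpn : ¬p.Nil := fun hn => hcu hn.eq
      have hqn : ¬q.Nil := fun hn => hcz hn.eq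
      exact eq_of_adj_of_degree_le_two (hpd c (by simp) hxc.ne' hcu) hxc.symm (adj_snd hpn)
        (adj_snd hqn) (fun h => hp.2 (h ▸ p.getVert_mem_support 1))
        (fun h => hq.2 (h ▸ q.getVert_mem_support 1))

end Walk

open Walk in
/-- In a forest a walk is a path as soon as it never immediately reverses an edge. -/
lemma IsAcyclic.isPath_append (hG : G.IsAcyclic) {u v w : α} {p : G.Walk u v} {q : G.Walk v w}
    (hp : p.IsPath) (hq : q.IsPath) (h : p.penultimate ≠ q.snd) : (p.append q).IsPath := by
  rw [hG.isPath_iff_isChain, edges_append, List.isChain_append]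
  refine ⟨(hG.isPath_iff_isChain p).mp hp, (hG.isPath_iff_isChain q).mp hq, ?_⟩
  intro e he f hf
  have hpe : p.edges ≠ [] := by rintro h'; simp [h'] at he
  have hqe : q.edges ≠ [] := by rintro h'; simp [h'] at hf
  rw [List.getLast?_eq_some_getLast hpe, Option.mem_some_iff] at he
  rw [List.head?_eq_some_head hqe, Option.mem_some_iff] at hf
  subst he hf
  rw [getLast_edges_eq_mk_penultimate_end, head_edges_eq_mk_start_snd]
  simp [h, (p.adj_penultimate (edges_eq_nil.not.mp hpe)).ne]

end SimpleGraph

open SimpleGraph Walk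

section Orbifold

variable {G : SimpleGraph V} [DecidableRel G.Adj]

lemma orbGraph_adj_of_isPath {a b : Nodes G} (hab : a ≠ b) {p : G.Walk a.1 b.1} (hp : p.IsPath)
    (hp3 : ∀ x ∈ p.support, x ≠ a.1 → x ≠ b.1 → G.degree x < 3) : (orbGraph G).Adj a b := by
  rw [orbGraph, fromRel_adj]
  refine ⟨hab, .inl ⟨p, hp, fun x hx hxa hxb => ?_⟩⟩
  have := hp.two_le_degree hx hxa hxb
  have := hp3 x hx hxa hxb
  omega

lemma exists_isPath_of_orbGraph_adj {a b : Nodes G} (h : (orbGraph G).Adj a b) :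
    ∃ p : G.Walk a.1 b.1, p.IsPath ∧ ∀ x ∈ p.support, x ≠ a.1 → x ≠ b.1 → G.degree x = 2 := by
  rw [orbGraph, fromRel_adj] at h
  obtain ⟨-, h | ⟨p, hp, hdeg⟩⟩ := h
  · exact h
  · exact ⟨p.reverse, hp.reverse, fun x hx hxa hxb => hdeg x (by simpa using hx) hxb hxa⟩

lemma degree_eq_two_of_orbGraph_adj (hT : G.IsTree) {a b : Nodes G} (h : (orbGraph G).Adj a b)
    {p : G.Walk a.1 b.1} (hp : p.IsPath) :
    ∀ x ∈ p.support, x ≠ a.1 → x ≠ b.1 → G.degree x = 2 := by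
  obtain ⟨q, hq, hdeg⟩ := exists_isPath_of_orbGraph_adj h
  rwa [(hT.existsUnique_path _ _).unique hp hq]

lemma snd_ne_of_orbGraph_adj (hT : G.IsTree) {v u z : Nodes G} (hu : (orbGraph G).Adj v u)
    (hz : (orbGraph G).Adj v z) (huz : u ≠ z) {p : G.Walk v.1 u.1} {q : G.Walk v.1 z.1}
    (hp : p.IsPath) (hq : q.IsPath) : p.snd ≠ q.snd := fun h =>
  huz <| Subtype.ext <| hp.end_eq_of_snd_eq hq
    (fun x hx hxv hxu => (degree_eq_two_of_orbGraph_adj hT hu hp x hx hxv hxu).le)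
    (fun x hx hxv hxz => (degree_eq_two_of_orbGraph_adj hT hz hq x hx hxv hxz).le) u.2 z.2 h

lemma reachable_induce_orbGraph_of_isPath {S : Set (Nodes G)} {a b : Nodes G}
    {p : G.Walk a.1 b.1} (hp : p.IsPath) (hS : ∀ w : Nodes G, w.1 ∈ p.support → w ∈ S) :
    ((orbGraph G).induce S).Reachable ⟨a, hS a p.start_mem_support⟩
      ⟨b, hS b p.end_mem_support⟩ := by
  induction hn : p.length using Nat.strong_induction_on generalizing a b p with
  | _ n ih =>
  by_cases hx : ∃ x ∈ p.support, x ≠ a.1 ∧ x ≠ b.1 ∧ 3 ≤ G.degree x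
  · obtain ⟨x, hx, hxa, hxb, hx3⟩ := hx
    have h₁ := ih _ (hn ▸ length_takeUntil_lt_length hx hxb) (b := ⟨x, hx3⟩) (hp.takeUntil hx)
      (fun w hw => hS w (support_takeUntil_subset_support _ _ hw)) rfl
    have h₂ := ih _ (hn ▸ length_dropUntil_lt_length hx hxa) (a := ⟨x, hx3⟩) (hp.dropUntil hx)
      (fun w hw => hS w (support_dropUntil_subset_support _ _ hw)) rfl
    exact h₁.trans h₂
  · push Not at hx
    by_cases hab : a = b
    · subst hab
      rfl
    · exact Adj.reachable (orbGraph_adj_of_isPath hab hp hx)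

lemma exists_orbGraph_adj_mem_support {a b : Nodes G} {p : G.Walk a.1 b.1} (hp : p.IsPath)
    (hab : a ≠ b) : ∃ u : Nodes G, u.1 ∈ p.support ∧ (orbGraph G).Adj a u := by
  obtain ⟨w⟩ := reachable_induce_orbGraph_of_isPath (S := {u | u.1 ∈ p.support}) hp fun _ => id
  have hw : ¬w.Nil := not_nil_of_ne fun h => hab (congrArg Subtype.val h)
  exact ⟨w.snd.1, w.snd.2, adj_snd hw⟩

lemma exists_walk_of_orbGraph_walk {a b : Nodes G} (w : (orbGraph G).Walk a b) :
    ∃ q : G.Walk a.1 b.1, ∀ c : Nodes G, c.1 ∈ q.support → c ∈ w.support := by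
  induction w with
  | nil => exact ⟨nil, fun c hc => by simp [Subtype.ext (by simpa using hc)]⟩
  | @cons a c b h w ih =>
    obtain ⟨q, hq⟩ := ih
    obtain ⟨r, -, hr⟩ := exists_isPath_of_orbGraph_adj h
    refine ⟨r.append q, fun d hd => ?_⟩
    rcases (mem_support_append_iff _ _).mp hd with hd | hd
    · by_cases hda : d = a
      · simp [hda]
      by_cases hdc : d = c
      · simp [hdc]
      have := hr d.1 hd (Subtype.val_injective.ne hda) (Subtype.val_injective.ne hdc)
      have := d.2
      omega
    · exact List.mem_cons_of_mem _ (hq d hd)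

end Orbifold

section Hull

variable {G : SimpleGraph V} [DecidableRel G.Adj] {I J : Finset (Nodes G)}

lemma mem_minJ {w : Nodes G} :
    w ∈ minJ G I ↔ ∃ a ∈ I, ∃ b ∈ I, ∃ p : G.Walk a.1 b.1, p.IsPath ∧ w.1 ∈ p.support := by
  simp [minJ]

lemma subset_minJ : I ⊆ minJ G I :=
  fun a ha => mem_minJ.mpr ⟨a, ha, a, ha, nil, .nil, start_mem_support _⟩

lemma nTree_minJ (hT : G.IsTree) (hI : I.Nonempty) : NTree G (minJ G I) := by
  obtain ⟨a₀, ha₀⟩ := hI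
  have key (w : Nodes G) (hw : w ∈ minJ G I) :
      ((orbGraph G).induce (minJ G I : Set (Nodes G))).Reachable ⟨w, hw⟩ ⟨a₀, subset_minJ ha₀⟩ := by
    obtain ⟨a, ha, b, hb, p, hp, hwp⟩ := mem_minJ.mp hw
    obtain ⟨q, hq⟩ := (hT.existsUnique_path a.1 a₀.1).exists
    have h₁ := reachable_induce_orbGraph_of_isPath (S := minJ G I) (hp.takeUntil hwp)
      fun c hc => mem_minJ.mpr ⟨a, ha, b, hb, p, hp, support_takeUntil_subset_support _ _ hc⟩
    have h₂ := reachable_induce_orbGraph_of_isPath (S := minJ G I) hq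
      fun c hc => mem_minJ.mpr ⟨a, ha, a₀, ha₀, q, hq, hc⟩
    exact h₁.symm.trans h₂
  exact ⟨⟨a₀, subset_minJ ha₀⟩,
    { preconnected := fun x y => (key _ x.2).trans (key _ y.2).symm
      nonempty := ⟨⟨a₀, subset_minJ ha₀⟩⟩ }⟩

lemma minJ_subset (hT : G.IsTree) (hJ : NTree G J) (hIJ : I ⊆ J) : minJ G I ⊆ J := by
  intro w hw
  obtain ⟨a, ha, b, hb, p, hp, hwp⟩ := mem_minJ.mp hw
  obtain ⟨ow⟩ := hJ.2.preconnected ⟨a, hIJ ha⟩ ⟨b, hIJ hb⟩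
  obtain ⟨q, hq⟩ := exists_walk_of_orbGraph_walk (ow.map (Embedding.induce _).toHom)
  have hpq : p = q.bypass := (hT.existsUnique_path _ _).unique hp q.bypass_isPath
  have hw' := hq w (q.support_bypass_subset_support (hpq ▸ hwp))
  rw [Walk.support_map, List.mem_map] at hw'
  obtain ⟨c, -, rfl⟩ := hw'
  exact c.2

lemma endVertsOrb_minJ_subset : endVertsOrb G (minJ G I) ⊆ I := by
  intro v hv
  rw [endVertsOrb, Finset.mem_filter] at hv
  by_contra hvI
  obtain ⟨a, ha, b, hb, p, hp, hvp⟩ := mem_minJ.mp hv.1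
  have hmem {c : Nodes G} (hc : c.1 ∈ p.support) : c ∈ minJ G I :=
    mem_minJ.mpr ⟨a, ha, b, hb, p, hp, hc⟩
  obtain ⟨u, hu, hvu⟩ := exists_orbGraph_adj_mem_support (hp.takeUntil hvp).reverse
    (b := a) (by rintro rfl; exact hvI ha)
  obtain ⟨z, hz, hvz⟩ := exists_orbGraph_adj_mem_support (hp.dropUntil hvp)
    (b := b) (by rintro rfl; exact hvI hb)
  rw [support_reverse, List.mem_reverse] at hu
  have huz : u ≠ z := by
    rintro rfl
    exact hvu.ne (Subtype.ext
      (hp.eq_of_mem_support_takeUntil_of_mem_support_dropUntil hvp hu hz).symm)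
  have hsub : ({u, z} : Finset (Nodes G)) ⊆ (minJ G I).filter fun t => (orbGraph G).Adj v t := by
    simp [Finset.insert_subset_iff, hvu, hvz, hmem (support_takeUntil_subset_support _ _ hu),
      hmem (support_dropUntil_subset_support _ _ hz)]
  have := Finset.card_le_card hsub
  rw [Finset.card_pair huz] at this
  omega

lemma one_lt_card_orbGraph_adj (hE : endVertsOrb G J ⊆ I) {v : Nodes G} (hv : v ∈ J)
    (hvI : v ∉ I) : 1 < (J.filter fun t => (orbGraph G).Adj v t).card := by
  by_contra h
  exact hvI (hE (Finset.mem_filter.mpr ⟨hv, by omega⟩))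

lemma exists_isPath_append_of_endVertsOrb_subset (hT : G.IsTree) (hE : endVertsOrb G J ⊆ I)
    {v : V} {w u : Nodes G} (P : G.Walk v u.1) (hP : P.IsPath) (hw : w ∈ J) (hu : u ∈ J)
    (hwu : (orbGraph G).Adj w u) (hwP : w.1 ∈ P.support) :
    ∃ x ∈ I, ∃ R : G.Walk u.1 x.1, (P.append R).IsPath := by
  induction hn : Fintype.card V - P.length using Nat.strong_induction_on generalizing w u P with
  | _ n ih =>
  by_cases huI : u ∈ I
  · exact ⟨u, huI, nil, by simpa using hP⟩
  obtain ⟨u', hu'f, hu'w⟩ := Finset.exists_mem_ne (one_lt_card_orbGraph_adj hE hu huI) w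
  obtain ⟨hu', huu'⟩ := Finset.mem_filter.mp hu'f
  obtain ⟨R, hR⟩ := (hT.existsUnique_path u.1 u'.1).exists
  have hwu' : w.1 ≠ u.1 := fun h => hwu.ne (Subtype.ext h)
  -- `R` leaves `u` by an edge other than the one towards `w`, by which `P` arrives
  have hPR : (P.append R).IsPath := by
    refine hT.isAcyclic.isPath_append hP hR ?_
    rw [← snd_reverse, ← snd_takeUntil hwu' P.reverse (by simpa using hwP)]
    exact snd_ne_of_orbGraph_adj hT hwu.symm huu' (Ne.symm hu'w) (hP.reverse.takeUntil _) hR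
  have hlen : Fintype.card V - (P.append R).length < n := by
    have := hPR.length_lt
    have : 0 < R.length :=
      not_nil_iff_lt_length.mp (not_nil_of_ne fun h => huu'.ne (Subtype.ext h))
    rw [length_append] at *
    omega
  obtain ⟨x, hx, R', hR'⟩ := ih _ hlen (P.append R) hPR hu hu' huu'
    ((mem_support_append_iff _ _).mpr (.inr R.start_mem_support)) rfl
  exact ⟨x, hx, R.append R', by rwa [append_assoc]⟩

lemma subset_minJ_of_endVertsOrb_subset (hT : G.IsTree) (hE : endVertsOrb G J ⊆ I) :
    J ⊆ minJ G I := by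
  intro v hv
  by_cases hvI : v ∈ I
  · exact subset_minJ hvI
  have hv₂ := one_lt_card_orbGraph_adj hE hv hvI
  obtain ⟨u, huf⟩ : (J.filter fun t => (orbGraph G).Adj v t).Nonempty :=
    Finset.card_pos.mp (by omega)
  obtain ⟨z, hzf, hzu⟩ := Finset.exists_mem_ne hv₂ u
  obtain ⟨hu, hvu⟩ := Finset.mem_filter.mp huf
  obtain ⟨hz, hvz⟩ := Finset.mem_filter.mp hzf
  obtain ⟨P, hP⟩ := (hT.existsUnique_path v.1 u.1).exists
  obtain ⟨Q, hQ⟩ := (hT.existsUnique_path v.1 z.1).exists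
  obtain ⟨x, hx, R, hPR⟩ :=
    exists_isPath_append_of_endVertsOrb_subset hT hE P hP hv hu hvu P.start_mem_support
  obtain ⟨y, hy, S, hQS⟩ :=
    exists_isPath_append_of_endVertsOrb_subset hT hE Q hQ hv hz hvz Q.start_mem_support
  have hsnd : (P.append R).snd ≠ (Q.append S).snd := by
    rw [snd_append_of_not_nil (not_nil_of_ne fun h => hvu.ne (Subtype.ext h)),
      snd_append_of_not_nil (not_nil_of_ne fun h => hvz.ne (Subtype.ext h))]
    exact snd_ne_of_orbGraph_adj hT hvu hvz (Ne.symm hzu) hP hQ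
  refine mem_minJ.mpr ⟨x, hx, y, hy, _,
    hT.isAcyclic.isPath_append hPR.reverse hQS (by rwa [penultimate_reverse]), by simp⟩

end Hull

/-- (a) For every nonempty set of nodes `I`, the set `J = Ī ∩ N` is the
minimal element of `N_tree` containing `I`; (b) the nonempty subsets of the
node set decompose as the disjoint union over `J ∈ N_tree` of the intervals
`{I : E_J ⊆ I ⊆ J}`, where `E_J` is the end-vertex set of `T^orb_J`. -/
theorem stmt19 (G : SimpleGraph V) [DecidableRel G.Adj] (hT : G.IsTree)
    (I : Finset (Nodes G)) (hI : I.Nonempty) :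
    (NTree G (minJ G I) ∧ I ⊆ minJ G I ∧
      ∀ J' : Finset (Nodes G), NTree G J' → I ⊆ J' → minJ G I ⊆ J')
    ∧ ∃! J : Finset (Nodes G), NTree G J ∧ endVertsOrb G J ⊆ I ∧ I ⊆ J := by
  refine ⟨⟨nTree_minJ hT hI, subset_minJ, fun J hJ hIJ => minJ_subset hT hJ hIJ⟩,
    minJ G I, ⟨nTree_minJ hT hI, endVertsOrb_minJ_subset, subset_minJ⟩, ?_⟩
  rintro J ⟨hJ, hE, hIJ⟩
  exact (subset_minJ_of_endVertsOrb_subset hT hE).antisymm (minJ_subset hT hJ hIJ)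
end
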